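/- Let G^{A,B} be a biconed graph, T a spanning tree of G^{A,B}, and e an edge of T. Then e is internally active in T if and only if either e = 00̄, or e is a connecting edge of T whose connecting vertex v satisfies: the component of v in T ∖ T_0 does not contain 0̄, contains no connecting vertex other than v, and v is the smallest vertex of that component with respect to the fixed vertex order. -/

import Mathlib

/-!
Formalization scaffold for "h-vectors of graphic matroids of biconed graphs".

A graph `G` (loops and parallel edges allowed) with vertex set `A ∪ B` is
modelled by an abstract finite edge type `E` with an endpoint map
`ends : E → Sym2 (Fin m ⊕ₗ Fin n)`, where `A = Fin m = {1,…,m}`,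
`Ā = B \ A = Fin n = {1̄,…,n̄}` and the finset `S ⊆ Fin m` records `A ∩ B`
(so `B = S ∪ Ā`).  The biconing `G^{A,B}` adds the two vertices `0` and `0̄`
and the edges `00̄`, `0a (a ∈ A)` and `0̄b (b ∈ B)`.
-/

namespace BiconedPaper

noncomputable section
open scoped Classical

/-! ### Walks in multigraphs presented by an endpoint map -/

/-- A walk in the multigraph with edge set `ε` and endpoint map `ends`. -/
inductive MWalk {ε ν : Type} (ends : ε → Sym2 ν) : ν → ν → Type
  | nil (u : ν) : MWalk ends u u
  | cons {u w : ν} (e : ε) (v : ν) (h : ends e = s(u, v)) (p : MWalk ends v w) :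
      MWalk ends u w

namespace MWalk

variable {ε ν : Type} {ends : ε → Sym2 ν}

/-- The list of edges traversed by a walk. -/
def edges : ∀ {u v : ν}, MWalk ends u v → List ε
  | _, _, nil _ => []
  | _, _, cons e _ _ p => e :: p.edges

/-- The list of vertices visited by a walk. -/
def support : ∀ {u v : ν}, MWalk ends u v → List ν
  | u, _, nil _ => [u]
  | u, _, cons _ _ _ p => u :: p.support

/-- A walk is a path if it visits no vertex twice. -/
def IsPath {u v : ν} (p : MWalk ends u v) : Prop := p.support.Nodup

/-- All edges of the walk belong to the edge set `F`. -/
def edgesIn {u v : ν} (p : MWalk ends u v) (F : Finset ε) : Prop :=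
  ∀ e ∈ p.edges, e ∈ F

/-- The number of "bridging" edges traversed by a walk, i.e. steps whose two
endpoints lie on different sides according to `sideF`. -/
def bridgeCount (sideF : ν → Bool) : ∀ {u v : ν}, MWalk ends u v → ℕ
  | _, _, nil _ => 0
  | u, _, cons _ v' _ p => (if sideF u = sideF v' then 0 else 1) + p.bridgeCount sideF

end MWalk

/-- `u` and `v` are joined by a walk all of whose edges lie in `F`. -/
def Reachable {ε ν : Type} (ends : ε → Sym2 ν) (F : Finset ε) (u v : ν) : Prop :=
  ∃ p : MWalk ends u v, p.edgesIn F

/-- An edge set is acyclic (a forest) iff removing any one of its edges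
disconnects the endpoints of that edge.  (In particular no loops and no
parallel pairs.) -/
def IsAcyclic {ε ν : Type} [DecidableEq ε] (ends : ε → Sym2 ν) (F : Finset ε) : Prop :=
  ∀ e ∈ F, ∀ u v : ν, ends e = s(u, v) → ¬ Reachable ends (F.erase e) u v

/-- A spanning tree: an acyclic edge set connecting every pair of vertices. -/
def IsSpanningTree {ε ν : Type} [DecidableEq ε] (ends : ε → Sym2 ν) (T : Finset ε) : Prop :=
  IsAcyclic ends T ∧ ∀ u v : ν, Reachable ends T u v

/-! ### Biconed graphs -/

/-- The data of a biconed graph `G^{A,B}`:  the graph `G` has vertex set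
`A ∪ B` with `A = Fin m`, `Ā = B \ A = Fin n`, `A ∩ B = S`, and abstract
edge set `E` (so loops and parallel edges are allowed). -/
structure BiconedGraph where
  m : ℕ
  n : ℕ
  E : Type
  fintypeE : Fintype E
  decEqE : DecidableEq E
  ends : E → Sym2 (Fin m ⊕ₗ Fin n)
  S : Finset (Fin m)

namespace BiconedGraph

variable (P : BiconedGraph)

instance : Fintype P.E := P.fintypeE
instance : DecidableEq P.E := P.decEqE

/-- The vertices of `G`, linearly ordered `1 < ⋯ < m < 1̄ < ⋯ < n̄`. -/
abbrev VG := Fin P.m ⊕ₗ Fin P.n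

/-- The vertices of `G^{A,B}_red`:  `⊥` is the vertex `0̄`, ordered
`0̄ < 1 < ⋯ < m < 1̄ < ⋯ < n̄`. -/
abbrev Vred := WithBot P.VG

/-- The vertices of `G^{A,B}`: `⊥` is `0`, ordered `0 < 0̄ < 1 < ⋯ < n̄`. -/
abbrev W := WithBot P.Vred

/-- The vertex `a ∈ A`. -/
def aVert (a : Fin P.m) : P.VG := toLex (Sum.inl a)
/-- The vertex `b ∈ Ā`. -/
def bVert (b : Fin P.n) : P.VG := toLex (Sum.inr b)
/-- Inclusion of the vertices of `G` into those of `G^{A,B}_red`. -/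
def liftV (x : P.VG) : P.Vred := (x : WithBot P.VG)
/-- Inclusion of the vertices of `G^{A,B}_red` into those of `G^{A,B}`. -/
def liftW (x : P.Vred) : P.W := (x : WithBot P.Vred)

/-- The edges of the biconed graph `G^{A,B}`:  the edge `00̄`, the coning
edges `0a (a ∈ A)`, `0̄b (b ∈ Ā)`, `0̄a (a ∈ A ∩ B)`, and the edges of `G`. -/
abbrev EB := Unit ⊕ (Fin P.m ⊕ (Fin P.n ⊕ ({a : Fin P.m // a ∈ P.S} ⊕ P.E)))

/-- The edge `00̄`. -/
abbrev e00 : P.EB := Sum.inl ()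
/-- The coning edge `0a`, `a ∈ A`. -/
abbrev eA (a : Fin P.m) : P.EB := Sum.inr (Sum.inl a)
/-- The coning edge `0̄b`, `b ∈ Ā`. -/
abbrev eB (b : Fin P.n) : P.EB := Sum.inr (Sum.inr (Sum.inl b))
/-- The coning edge `0̄a`, `a ∈ A ∩ B`. -/
abbrev eS (a : {a : Fin P.m // a ∈ P.S}) : P.EB := Sum.inr (Sum.inr (Sum.inr (Sum.inl a)))
/-- An original edge of `G`. -/
abbrev eG (e : P.E) : P.EB := Sum.inr (Sum.inr (Sum.inr (Sum.inr e)))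

/-- The endpoint map of `G^{A,B}`. -/
def endsB : P.EB → Sym2 P.W
  | Sum.inl _ => s((⊥ : P.W), P.liftW ⊥)
  | Sum.inr (Sum.inl a) => s((⊥ : P.W), P.liftW (P.liftV (P.aVert a)))
  | Sum.inr (Sum.inr (Sum.inl b)) => s(P.liftW ⊥, P.liftW (P.liftV (P.bVert b)))
  | Sum.inr (Sum.inr (Sum.inr (Sum.inl a))) => s(P.liftW ⊥, P.liftW (P.liftV (P.aVert a.1)))
  | Sum.inr (Sum.inr (Sum.inr (Sum.inr e))) => (P.ends e).map fun x => P.liftW (P.liftV x)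

/-- The spanning tree `T₀`, consisting of `00̄`, the edges `0a (a ∈ A)` and
the edges `0̄b (b ∈ Ā)`. -/
def T0 : Finset P.EB :=
  Finset.univ.filter fun e => match e with
    | Sum.inl _ => True
    | Sum.inr (Sum.inl _) => True
    | Sum.inr (Sum.inr (Sum.inl _)) => True
    | _ => False

/-- The edges of `G^{A,B}_red` (delete the edges of `T₀` and the vertex `0`):
the edges `0̄a (a ∈ A ∩ B)` together with the edges of `G`. -/
abbrev Ered := {a : Fin P.m // a ∈ P.S} ⊕ P.E

/-- The endpoint map of `G^{A,B}_red`; `⊥` is the vertex `0̄`. -/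
def endsRed : P.Ered → Sym2 P.Vred
  | Sum.inl a => s((⊥ : P.Vred), P.liftV (P.aVert a.1))
  | Sum.inr e => (P.ends e).map P.liftV

/-- Inclusion of the edges of `G^{A,B}_red` into those of `G^{A,B}`. -/
def redToEB : P.Ered → P.EB
  | Sum.inl a => P.eS a
  | Sum.inr e => P.eG e

/-- The edge set `T \ T₀` of `T`, viewed inside `G^{A,B}_red`. -/
def redOf (T : Finset P.EB) : Finset P.Ered :=
  Finset.univ.filter fun e => P.redToEB e ∈ T

/-- `true` on the vertices of `A`, `false` on the vertices of `Ā ∪ {0̄}`. -/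
def side : P.Vred → Bool :=
  WithBot.recBotCoe false fun x => Sum.elim (fun _ => true) (fun _ => false) (ofLex x)

/-- The vertex lies in `A`. -/
def InA (v : P.Vred) : Prop := ∃ a : Fin P.m, v = P.liftV (P.aVert a)

/-- An edge of `G^{A,B}_red` is bridging if it joins a vertex of `A` to a
vertex of `Ā ∪ {0̄}`. -/
def BridgingE (e : P.Ered) : Prop :=
  ∃ u v : P.Vred, P.endsRed e = s(u, v) ∧ P.side u ≠ P.side v

/-! ### 2-edge-rooted forests -/

/-- The underlying edge set `F` of the multiset of edges given by the
multiplicity function `mult` (an edge `e` carries `mult e - 1` edge roots). -/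
def mSupport (mult : P.Ered → ℕ) : Finset P.Ered :=
  Finset.univ.filter fun e => mult e ≠ 0

/-- The degree of the multiset of edges given by `mult`. -/
def deg (mult : P.Ered → ℕ) : ℕ := ∑ e : P.Ered, mult e

/-- Edge `e` meets the connected component of `v` in the edge set `F`. -/
def Touches (F : Finset P.Ered) (v : P.Vred) (e : P.Ered) : Prop :=
  ∃ u : P.Vred, u ∈ P.endsRed e ∧ Reachable P.endsRed F v u

/-- The total number of edge roots in the component of `v`. -/
def compEdgeRoots (mult : P.Ered → ℕ) (v : P.Vred) : ℕ :=
  ∑ e ∈ P.mSupport mult, if P.Touches (P.mSupport mult) v e then mult e - 1 else 0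

/-- The component of `v` is `compCount`-edge-rooted:  the number of its edge
roots, plus `1` if it contains the vertex `0̄`. -/
def compCount (mult : P.Ered → ℕ) (v : P.Vred) : ℕ :=
  P.compEdgeRoots mult v +
    if Reachable P.endsRed (P.mSupport mult) v (⊥ : P.Vred) then 1 else 0

/-- Condition (C3) for the `2`-edge-rooted component of `v`:  the unique
shortest path containing both edge roots (resp. the vertex `0̄` and the edge
root, if the component contains `0̄`) has an odd number of bridging edges.
The shortest path containing two edges is the unique path whose first and
last edges are the two rooted edges; if the two edge roots lie on one common
edge (`mult e = 3`) the path is that single edge. -/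
def C3At (mult : P.Ered → ℕ) (v : P.Vred) : Prop :=
  (Reachable P.endsRed (P.mSupport mult) v (⊥ : P.Vred) →
    ∃ (x : P.Vred) (p : MWalk P.endsRed (⊥ : P.Vred) x),
      p.IsPath ∧ p.edgesIn (P.mSupport mult) ∧
      (∃ e, p.edges.getLast? = some e ∧ 2 ≤ mult e) ∧
      Odd (p.bridgeCount P.side)) ∧
  (¬ Reachable P.endsRed (P.mSupport mult) v (⊥ : P.Vred) →
    ∃ (x y : P.Vred) (p : MWalk P.endsRed x y),
      p.IsPath ∧ p.edgesIn (P.mSupport mult) ∧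
      Reachable P.endsRed (P.mSupport mult) v x ∧
      (∃ e, p.edges.head? = some e ∧ 2 ≤ mult e) ∧
      (∃ e, p.edges.getLast? = some e ∧ 2 ≤ mult e) ∧
      (∀ e, p.edges = [e] → mult e = 3) ∧
      Odd (p.bridgeCount P.side))

/-- `mult : Ered → ℕ` is (the multiplicity function of) a 2-edge-rooted
forest of `G^{A,B}_red`:
(C0) its support is a spanning forest;
(C1) at most one component is `2`-edge-rooted;
(C2) every other component is `0`- or `1`-edge-rooted;
(C3) the parity condition on the path joining the two roots. -/
def Is2ERF (mult : P.Ered → ℕ) : Prop :=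
  IsAcyclic P.endsRed (P.mSupport mult) ∧
  (∀ v : P.Vred, P.compCount mult v ≤ 2) ∧
  (∀ u v : P.Vred, P.compCount mult u = 2 → P.compCount mult v = 2 →
    Reachable P.endsRed (P.mSupport mult) u v) ∧
  (∀ v : P.Vred, P.compCount mult v = 2 → P.C3At mult v)

/-! ### Birooted forests -/

/-- `(F, R)` is a birooted forest of `G^{A,B}_red`:  `F` is a spanning forest,
the root set `R` contains `0̄`, every component of `F` contains at least one
root, no component contains three roots, at most one component contains two
roots, and a component with two roots has one root in `A` and the other in
`Ā ∪ {0̄}`. -/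
def IsBirootedForest (F : Finset P.Ered) (R : Set P.Vred) : Prop :=
  IsAcyclic P.endsRed F ∧
  (⊥ : P.Vred) ∈ R ∧
  (∀ v : P.Vred, ∃ r ∈ R, Reachable P.endsRed F v r) ∧
  (∀ r₁ ∈ R, ∀ r₂ ∈ R, ∀ r₃ ∈ R, r₁ ≠ r₂ → r₁ ≠ r₃ → r₂ ≠ r₃ →
    Reachable P.endsRed F r₁ r₂ → Reachable P.endsRed F r₁ r₃ → False) ∧
  (∀ r₁ ∈ R, ∀ r₂ ∈ R, ∀ r₃ ∈ R, ∀ r₄ ∈ R, r₁ ≠ r₂ → r₃ ≠ r₄ →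
    Reachable P.endsRed F r₁ r₂ → Reachable P.endsRed F r₃ r₄ →
    Reachable P.endsRed F r₁ r₃) ∧
  (∀ r₁ ∈ R, ∀ r₂ ∈ R, r₁ ≠ r₂ → Reachable P.endsRed F r₁ r₂ →
    (P.InA r₁ ∧ ¬ P.InA r₂) ∨ (P.InA r₂ ∧ ¬ P.InA r₁))

/-! ### Internal activity and the edge order -/

/-- `e` is internally passive in the spanning tree `T`:  it can be exchanged
for a strictly smaller edge `f` so that the result is again a spanning tree. -/
def InternallyPassive (ord : LinearOrder P.EB) (T : Finset P.EB) (e : P.EB) : Prop :=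
  e ∈ T ∧ ∃ f : P.EB, ord.lt f e ∧ IsSpanningTree P.endsB (insert f (T.erase e))

/-- `e` is internally active in the spanning tree `T`. -/
def InternallyActive (ord : LinearOrder P.EB) (T : Finset P.EB) (e : P.EB) : Prop :=
  e ∈ T ∧ ¬ ∃ f : P.EB, ord.lt f e ∧ IsSpanningTree P.endsB (insert f (T.erase e))

/-- The number of internally passive edges of `T`. -/
def ipCount (ord : LinearOrder P.EB) (T : Finset P.EB) : ℕ :=
  (T.filter fun e => P.InternallyPassive ord T e).card

/-- The smaller endpoint of an edge of `G^{A,B}`. -/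
def endMin (e : P.EB) : P.W := Sym2.lift ⟨fun a b => a ⊓ b, fun a b => inf_comm a b⟩ (P.endsB e)
/-- The larger endpoint of an edge of `G^{A,B}`. -/
def endMax (e : P.EB) : P.W := Sym2.lift ⟨fun a b => a ⊔ b, fun a b => sup_comm a b⟩ (P.endsB e)

/-- The endpoints of an edge, as an ordered pair in the lexicographic square
of the vertex order `0 < 0̄ < 1 < ⋯ < m < 1̄ < ⋯ < n̄`. -/
def lexEnds (e : P.EB) : P.W ×ₗ P.W := toLex (P.endMin e, P.endMax e)

/-- A linear order on the edges of `G^{A,B}` is admissible if it refines the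
lexicographic order on endpoints (so parallel edges are ordered arbitrarily). -/
def AdmissibleOrder (ord : LinearOrder P.EB) : Prop :=
  ∀ e f : P.EB, P.lexEnds e < P.lexEnds f → ord.lt e f

/-- `v` is a connecting vertex of `T`:  `v ∈ A` and `v` is adjacent to `0` in
`T`, or `v ∈ Ā` and `v` is adjacent to `0̄` in `T`. -/
def ConnVertex (T : Finset P.EB) (v : P.Vred) : Prop :=
  (∃ a : Fin P.m, v = P.liftV (P.aVert a) ∧ P.eA a ∈ T) ∨
  (∃ b : Fin P.n, v = P.liftV (P.bVert b) ∧ P.eB b ∈ T)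

/-- `e` is a connecting edge of `T` (an edge `0a`, `a ∈ A`, or `0̄b`, `b ∈ Ā`)
with connecting vertex `v`. -/
def ConnEdge (T : Finset P.EB) (e : P.EB) (v : P.Vred) : Prop :=
  e ∈ T ∧ ((∃ a : Fin P.m, e = P.eA a ∧ v = P.liftV (P.aVert a)) ∨
           (∃ b : Fin P.n, e = P.eB b ∧ v = P.liftV (P.bVert b)))

/-! ### The h-vector -/

/-- `f_{i-1}`:  the number of acyclic edge sets of cardinality `i` in `G^{A,B}`. -/
def numAcyclic (i : ℕ) : ℕ :=
  Nat.card {F : Finset P.EB // IsAcyclic P.endsB F ∧ F.card = i}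

/-- The rank of the graphic matroid of `G^{A,B}`:  `|V| - 1 = m + n + 1`. -/
def d : ℕ := P.m + P.n + 1

/-- `h` is the h-vector of the graphic matroid of `G^{A,B}`:  it satisfies
`Σ_{i=0}^{d} f_{i-1} (t-1)^{d-i} = Σ_{k=0}^{d} h_k t^{d-k}`. -/
def IsHVector (h : ℕ → ℤ) : Prop :=
  ∑ i ∈ Finset.range (P.d + 1),
      Polynomial.C ((P.numAcyclic i : ℤ)) * (Polynomial.X - 1) ^ (P.d - i)
    = ∑ k ∈ Finset.range (P.d + 1), Polynomial.C (h k) * Polynomial.X ^ (P.d - k)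

end BiconedGraph

/-- `(h 0, …, h d)` is a pure O-sequence:  there is a multicomplex `M` of
multisets on a finite ground set (nonempty, closed under sub-multisets), all
of whose inclusion-maximal members have the same cardinality, whose members
all have cardinality at most `d`, and which has exactly `h i` members of
cardinality `i` for every `i ≤ d`. -/
def IsPureOSeq (d : ℕ) (h : ℕ → ℤ) : Prop :=
  ∃ (N : ℕ) (M : Set (Multiset (Fin N))),
    M.Nonempty ∧
    (∀ s ∈ M, ∀ t : Multiset (Fin N), t ≤ s → t ∈ M) ∧
    (∀ s ∈ M, ∀ t ∈ M, (∀ u ∈ M, s ≤ u → u = s) → (∀ u ∈ M, t ≤ u → u = t) →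
      Multiset.card s = Multiset.card t) ∧
    (∀ s ∈ M, Multiset.card s ≤ d) ∧
    (∀ i ≤ d, (Nat.card {s : Multiset (Fin N) // s ∈ M ∧ Multiset.card s = i} : ℤ) = h i)


/-!
An edge `e ∈ T` is internally active iff no edge `f < e` crosses the cut of `T` obtained by
deleting `e`, and `00̄` is the least edge. An edge of `T` outside `T₀` is always passive: if its
cut separates `0` from `0̄` then `00̄` crosses it, and otherwise the `T₀`-edge at an endpoint
on the other side from `0, 0̄` crosses it and is smaller. For the `T₀`-edge at a vertex `z`,
activity keeps `0` and `0̄` off the side of `z`, which is then exactly the component of `z` in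
`T ∖ T₀`; every edge below the `T₀`-edge at `z` touches only vertices smaller than `z` besides
`0`, so none of them enters that component precisely when the three conditions hold.
-/

namespace MWalk

variable {ε ν : Type} {ends : ε → Sym2 ν}

def append : ∀ {u v w : ν}, MWalk ends u v → MWalk ends v w → MWalk ends u w
  | _, _, _, nil _, q => q
  | _, _, _, cons e x h p, q => cons e x h (p.append q)

@[simp]
lemma edges_append : ∀ {u v w : ν} (p : MWalk ends u v) (q : MWalk ends v w),
    (p.append q).edges = p.edges ++ q.edges
  | _, _, _, nil _, _ => rfl
  | _, _, _, cons e x h p, q => by simp [append, edges, edges_append p q]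

end MWalk

namespace Reachable

variable {ε ν : Type} {ends : ε → Sym2 ν} {F : Finset ε} {u v w : ν}

lemma refl (F : Finset ε) (u : ν) : Reachable ends F u u :=
  ⟨.nil u, by simp [MWalk.edgesIn, MWalk.edges]⟩

lemma single {e : ε} (he : e ∈ F) (h : ends e = s(u, v)) : Reachable ends F u v :=
  ⟨.cons e v h (.nil v), by simpa [MWalk.edgesIn, MWalk.edges] using he⟩

lemma trans (h₁ : Reachable ends F u v) (h₂ : Reachable ends F v w) :
    Reachable ends F u w := by
  obtain ⟨p, hp⟩ := h₁
  obtain ⟨q, hq⟩ := h₂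
  refine ⟨p.append q, fun e he => ?_⟩
  rcases List.mem_append.1 (MWalk.edges_append p q ▸ he) with h | h
  exacts [hp e h, hq e h]

lemma mono {F' : Finset ε} (hF : F ⊆ F') (h : Reachable ends F u v) :
    Reachable ends F' u v :=
  let ⟨p, hp⟩ := h
  ⟨p, fun e he => hF (hp e he)⟩

lemma mem_of_closed {S : Set ν} (hS : ∀ g ∈ F, ∀ a b, ends g = s(a, b) → a ∈ S → b ∈ S)
    (hu : u ∈ S) (h : Reachable ends F u v) : v ∈ S := by
  obtain ⟨p, hp⟩ := h
  induction p with
  | nil => exact hu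
  | cons g x hg p ih =>
    exact ih (hS g (hp g List.mem_cons_self) _ _ hg hu)
      (fun e he => hp e (List.mem_cons_of_mem _ he))

lemma symm (h : Reachable ends F u v) : Reachable ends F v u :=
  h.mem_of_closed (S := {w | Reachable ends F w u})
    (fun _ hg _ _ hgab ha => (single hg (hgab.trans Sym2.eq_swap)).trans ha) (refl F u)

lemma map {ε' ν' : Type} {ends' : ε' → Sym2 ν'} {F' : Finset ε'} (φ : ε → ε') (ψ : ν → ν')
    (hφ : ∀ d ∈ F, φ d ∈ F' ∧ ends' (φ d) = (ends d).map ψ) (h : Reachable ends F u v) :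
    Reachable ends' F' (ψ u) (ψ v) :=
  h.mem_of_closed (S := {w | Reachable ends' F' (ψ u) (ψ w)})
    (fun g hg _ _ hgab ha => ha.trans (single (hφ g hg).1 (by rw [(hφ g hg).2, hgab]; rfl)))
    (refl F' (ψ u))

variable [DecidableEq ε]

lemma insert_iff {f : ε} {p q : ν} (hf : ends f = s(p, q)) :
    Reachable ends (insert f F) u v ↔
      Reachable ends F u v ∨ (Reachable ends F u p ∧ Reachable ends F q v) ∨
        (Reachable ends F u q ∧ Reachable ends F p v) := by
  constructor
  · refine fun h => h.mem_of_closed (S := {w | Reachable ends F u w ∨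
      (Reachable ends F u p ∧ Reachable ends F q w) ∨
        (Reachable ends F u q ∧ Reachable ends F p w)})
      (fun g hg a b hgab ha => ?_) (Or.inl (refl F u))
    rcases Finset.mem_insert.1 hg with rfl | hg
    · rcases Sym2.eq_iff.1 (hgab.symm.trans hf) with ⟨rfl, rfl⟩ | ⟨rfl, rfl⟩
      · rcases ha with h | ⟨h, -⟩ | ⟨h, -⟩
        exacts [Or.inr (Or.inl ⟨h, refl F _⟩), Or.inr (Or.inl ⟨h, refl F _⟩), Or.inl h]
      · rcases ha with h | ⟨h, -⟩ | ⟨h, -⟩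
        exacts [Or.inr (Or.inr ⟨h, refl F _⟩), Or.inl h, Or.inr (Or.inr ⟨h, refl F _⟩)]
    · have hab := single hg hgab
      exact ha.imp (·.trans hab) (Or.imp (And.imp_right (·.trans hab))
        (And.imp_right (·.trans hab)))
  · have hF : F ⊆ insert f F := Finset.subset_insert f F
    have hpq : Reachable ends (insert f F) p q := single (Finset.mem_insert_self f F) hf
    rintro (h | ⟨h₁, h₂⟩ | ⟨h₁, h₂⟩)
    · exact h.mono hF
    · exact (h₁.mono hF).trans (hpq.trans (h₂.mono hF))
    · exact (h₁.mono hF).trans (hpq.symm.trans (h₂.mono hF))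

end Reachable

namespace IsSpanningTree

variable {ε ν : Type} [DecidableEq ε] {ends : ε → Sym2 ν} {T : Finset ε} {e f : ε}
  {x y p q : ν}

lemma reachable_erase_or (hT : IsSpanningTree ends T) (heT : e ∈ T) (he : ends e = s(x, y))
    (w : ν) : Reachable ends (T.erase e) x w ∨ Reachable ends (T.erase e) y w := by
  refine (hT.2 x w).mem_of_closed
    (S := {w | Reachable ends (T.erase e) x w ∨ Reachable ends (T.erase e) y w})
    (fun g hg a b hgab ha => ?_) (Or.inl (.refl _ x))
  by_cases hge : g = e
  · subst hge
    rcases Sym2.eq_iff.1 (hgab.symm.trans he) with ⟨-, rfl⟩ | ⟨-, rfl⟩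
    exacts [Or.inr (.refl _ _), Or.inl (.refl _ _)]
  · have hab := Reachable.single (Finset.mem_erase.2 ⟨hge, hg⟩) hgab
    exact ha.imp (·.trans hab) (·.trans hab)

lemma exchange (hT : IsSpanningTree ends T) (heT : e ∈ T) (he : ends e = s(x, y))
    (hf : ends f = s(p, q)) (hp : Reachable ends (T.erase e) x p)
    (hq : Reachable ends (T.erase e) y q) : IsSpanningTree ends (insert f (T.erase e)) := by
  have hxy : ¬ Reachable ends (T.erase e) x y := hT.1 e heT x y he
  have hpq : ¬ Reachable ends (T.erase e) p q := fun h => hxy (hp.trans (h.trans hq.symm))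
  have hfT : f ∉ T.erase e := fun hf' => hpq (.single hf' hf)
  have hsub : T.erase e ⊆ insert f (T.erase e) := Finset.subset_insert _ _
  refine ⟨fun g hg a b hgab hab => ?_, fun u w => ?_⟩
  · rcases Finset.mem_insert.1 hg with rfl | hg
    · rw [Finset.erase_insert hfT] at hab
      rcases Sym2.eq_iff.1 (hgab.symm.trans hf) with ⟨rfl, rfl⟩ | ⟨rfl, rfl⟩
      exacts [hpq hab, hpq hab.symm]
    · -- a path from `a` to `b` through `f` would join the two sides of `e` via `g`
      have hgf : g ≠ f := fun h => hfT (h ▸ hg)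
      have hsub' : (T.erase e).erase g ⊆ T.erase e := Finset.erase_subset g _
      have hag := Reachable.single hg hgab
      rw [Finset.erase_insert_of_ne hgf.symm, Reachable.insert_iff hf] at hab
      rcases hab with h | ⟨h₁, h₂⟩ | ⟨h₁, h₂⟩
      · exact hT.1 g (Finset.mem_of_mem_erase hg) a b hgab
          (h.mono (Finset.erase_right_comm (s := T) ▸ Finset.erase_subset e _))
      · exact hpq ((h₁.mono hsub').symm.trans (hag.trans (h₂.mono hsub').symm))
      · exact hpq ((h₂.mono hsub').trans (hag.symm.trans (h₁.mono hsub')))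
  · have hxy' : Reachable ends (insert f (T.erase e)) x y :=
      (hp.mono hsub).trans ((Reachable.single (Finset.mem_insert_self _ _) hf).trans
        (hq.mono hsub).symm)
    have hx : ∀ w, Reachable ends (insert f (T.erase e)) x w := fun w =>
      (hT.reachable_erase_or heT he w).elim (·.mono hsub) (fun h => hxy'.trans (h.mono hsub))
    exact (hx u).symm.trans (hx w)

lemma exchange_iff (hT : IsSpanningTree ends T) (heT : e ∈ T) (he : ends e = s(x, y))
    (hf : ends f = s(p, q)) :
    IsSpanningTree ends (insert f (T.erase e)) ↔
      (Reachable ends (T.erase e) x p ∧ Reachable ends (T.erase e) y q) ∨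
        (Reachable ends (T.erase e) x q ∧ Reachable ends (T.erase e) y p) := by
  refine ⟨fun hST => ?_, ?_⟩
  · rcases (Reachable.insert_iff hf).1 (hST.2 x y) with h | ⟨h₁, h₂⟩ | ⟨h₁, h₂⟩
    · exact absurd h (hT.1 e heT x y he)
    · exact Or.inl ⟨h₁, h₂.symm⟩
    · exact Or.inr ⟨h₁, h₂.symm⟩
  · rintro (⟨hp, hq⟩ | ⟨hq, hp⟩)
    · exact hT.exchange heT he hf hp hq
    · exact hT.exchange heT he (hf.trans Sym2.eq_swap) hq hp

end IsSpanningTree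

namespace BiconedGraph

variable {P : BiconedGraph} {ord : LinearOrder P.EB} {T : Finset P.EB}

lemma liftV_injective : Function.Injective P.liftV := WithBot.coe_injective

lemma liftW_injective : Function.Injective P.liftW := WithBot.coe_injective

lemma liftV_strictMono : StrictMono P.liftV := WithBot.coe_strictMono

lemma liftW_strictMono : StrictMono P.liftW := WithBot.coe_strictMono

lemma liftW_le_liftW_bot_iff {u : P.Vred} : P.liftW u ≤ P.liftW ⊥ ↔ u = ⊥ :=
  WithBot.coe_le_coe.trans le_bot_iff

lemma le_liftW_bot_iff {w : P.W} : w ≤ P.liftW ⊥ ↔ w = ⊥ ∨ w = P.liftW ⊥ := by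
  induction w using WithBot.recBotCoe with
  | bot => exact iff_of_true bot_le (Or.inl rfl)
  | coe u =>
    rw [show ((u : P.W) = P.liftW u) from rfl, liftW_le_liftW_bot_iff,
      liftW_injective.eq_iff]
    exact ⟨Or.inr, fun h => h.resolve_left WithBot.coe_ne_bot⟩

lemma aVert_or_bVert (z : P.VG) : (∃ a, z = P.aVert a) ∨ ∃ b, z = P.bVert b := by
  rcases z with a | b
  exacts [Or.inl ⟨a, rfl⟩, Or.inr ⟨b, rfl⟩]

lemma aVert_lt_bVert (a : Fin P.m) (b : Fin P.n) : P.aVert a < P.bVert b :=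
  Sum.Lex.inl_lt_inr a b

/-- The edge of `T₀` at a vertex `z` of `G`; it joins `z` to `apex z`, which is `0` for
`z ∈ A` and `0̄` for `z ∈ Ā`. -/
def coneEdge (z : P.VG) : P.EB := Sum.elim P.eA P.eB (ofLex z)

def apex (z : P.VG) : P.W := Sum.elim (fun _ => ⊥) (fun _ => P.liftW ⊥) (ofLex z)

@[simp] lemma coneEdge_aVert (a : Fin P.m) : P.coneEdge (P.aVert a) = P.eA a := rfl

@[simp] lemma coneEdge_bVert (b : Fin P.n) : P.coneEdge (P.bVert b) = P.eB b := rfl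

@[simp] lemma apex_aVert (a : Fin P.m) : P.apex (P.aVert a) = ⊥ := rfl

@[simp] lemma apex_bVert (b : Fin P.n) : P.apex (P.bVert b) = P.liftW ⊥ := rfl

lemma coneEdge_injective : Function.Injective P.coneEdge := by
  intro z z' h
  rcases aVert_or_bVert z with ⟨a, rfl⟩ | ⟨b, rfl⟩ <;>
    rcases aVert_or_bVert z' with ⟨a', rfl⟩ | ⟨b', rfl⟩ <;> simp_all

lemma apex_le (z : P.VG) : P.apex z ≤ P.liftW ⊥ := by
  rcases aVert_or_bVert z with ⟨a, rfl⟩ | ⟨b, rfl⟩ <;> simp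

lemma apex_mono : Monotone P.apex := by
  intro z z' h
  rcases aVert_or_bVert z with ⟨a, rfl⟩ | ⟨b, rfl⟩
  · simp
  · rcases aVert_or_bVert z' with ⟨a', rfl⟩ | ⟨b', rfl⟩
    · exact absurd h (aVert_lt_bVert a' b).not_ge
    · simp

lemma endsB_coneEdge (z : P.VG) :
    P.endsB (P.coneEdge z) = s(P.apex z, P.liftW (P.liftV z)) := by
  rcases aVert_or_bVert z with ⟨a, rfl⟩ | ⟨b, rfl⟩ <;> rfl

lemma endsB_redToEB (d : P.Ered) : P.endsB (P.redToEB d) = (P.endsRed d).map P.liftW := by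
  rcases d with s | d
  · rfl
  · exact (Sym2.map_map ..).symm

lemma mem_endsB_e00 {w : P.W} : w ∈ P.endsB P.e00 ↔ w ≤ P.liftW ⊥ :=
  Sym2.mem_iff.trans le_liftW_bot_iff.symm

lemma edge_cases (e : P.EB) :
    e = P.e00 ∨ (∃ z, e = P.coneEdge z) ∨ ∃ d, e = P.redToEB d := by
  rcases e with ⟨⟩ | a | b | s | d
  exacts [Or.inl rfl, Or.inr (Or.inl ⟨P.aVert a, rfl⟩), Or.inr (Or.inl ⟨P.bVert b, rfl⟩),
    Or.inr (Or.inr ⟨.inl s, rfl⟩), Or.inr (Or.inr ⟨.inr d, rfl⟩)]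

@[simp] lemma coneEdge_ne_e00 (z : P.VG) : P.coneEdge z ≠ P.e00 := by
  rcases aVert_or_bVert z with ⟨a, rfl⟩ | ⟨b, rfl⟩ <;> simp

@[simp] lemma redToEB_ne_e00 (d : P.Ered) : P.redToEB d ≠ P.e00 := by
  rcases d with s | d <;> simp [redToEB]

@[simp] lemma redToEB_ne_coneEdge (d : P.Ered) (z : P.VG) : P.redToEB d ≠ P.coneEdge z := by
  rcases aVert_or_bVert z with ⟨a, rfl⟩ | ⟨b, rfl⟩ <;> rcases d with s | d <;> simp [redToEB]

lemma connEdge_iff {e : P.EB} {v : P.Vred} :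
    P.ConnEdge T e v ↔ e ∈ T ∧ ∃ z, e = P.coneEdge z ∧ v = P.liftV z := by
  refine and_congr_right fun _ => ⟨?_, fun ⟨z, he, hv⟩ => ?_⟩
  · rintro (⟨a, rfl, rfl⟩ | ⟨b, rfl, rfl⟩)
    exacts [⟨P.aVert a, rfl, rfl⟩, ⟨P.bVert b, rfl, rfl⟩]
  · rcases aVert_or_bVert z with ⟨a, rfl⟩ | ⟨b, rfl⟩
    exacts [Or.inl ⟨a, he, hv⟩, Or.inr ⟨b, he, hv⟩]

lemma connVertex_iff {u : P.Vred} :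
    P.ConnVertex T u ↔ ∃ z, u = P.liftV z ∧ P.coneEdge z ∈ T := by
  refine ⟨?_, fun ⟨z, hu, hz⟩ => ?_⟩
  · rintro (⟨a, rfl, h⟩ | ⟨b, rfl, h⟩)
    exacts [⟨P.aVert a, rfl, h⟩, ⟨P.bVert b, rfl, h⟩]
  · rcases aVert_or_bVert z with ⟨a, rfl⟩ | ⟨b, rfl⟩
    exacts [Or.inl ⟨a, hu, hz⟩, Or.inr ⟨b, hu, hz⟩]

lemma AdmissibleOrder.lexEnds_le (hord : P.AdmissibleOrder ord)
    {e f : P.EB} (h : ord.lt f e) : P.lexEnds f ≤ P.lexEnds e :=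
  not_lt.1 fun h' => by let _ := ord; exact lt_asymm h (hord e f h')

lemma lexEnds_of_endsB {e : P.EB} {c₁ c₂ : P.W} (h : P.endsB e = s(c₁, c₂)) (hle : c₁ ≤ c₂) :
    P.lexEnds e = toLex (c₁, c₂) := by
  simp [lexEnds, endMin, endMax, h, inf_eq_left.2 hle, sup_eq_right.2 hle]

lemma toLex_lt_lexEnds {c₁ c₂ : P.W} {f : P.EB} (h : c₁ < P.endMin f) :
    toLex (c₁, c₂) < P.lexEnds f :=
  Prod.Lex.toLex_lt_toLex.2 (Or.inl h)

lemma lexEnds_e00 : P.lexEnds P.e00 = toLex (⊥, P.liftW ⊥) := lexEnds_of_endsB rfl bot_le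

lemma lexEnds_coneEdge (z : P.VG) :
    P.lexEnds (P.coneEdge z) = toLex (P.apex z, P.liftW (P.liftV z)) :=
  lexEnds_of_endsB (endsB_coneEdge z)
    ((apex_le z).trans (liftW_strictMono (WithBot.bot_lt_coe z)).le)

lemma lexEnds_eS (s : {a : Fin P.m // a ∈ P.S}) :
    P.lexEnds (P.redToEB (.inl s)) = toLex (P.liftW ⊥, P.liftW (P.liftV (P.aVert s))) :=
  lexEnds_of_endsB rfl (liftW_strictMono (WithBot.bot_lt_coe _)).le

lemma liftW_bot_lt_endMin_eG (d : P.E) : P.liftW ⊥ < P.endMin (P.redToEB (.inr d)) := by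
  obtain ⟨z₁, z₂, h⟩ := Sym2.exists.1 ⟨P.ends d, rfl⟩
  rw [endMin, endsB_redToEB, endsRed, h, Sym2.map_map, Sym2.map_mk, Sym2.lift_mk]
  show P.liftW ⊥ < P.liftW (P.liftV z₁) ⊓ P.liftW (P.liftV z₂)
  rcases le_total (P.liftW (P.liftV z₁)) (P.liftW (P.liftV z₂)) with h | h
  · rw [inf_eq_left.2 h]; exact liftW_strictMono (WithBot.bot_lt_coe _)
  · rw [inf_eq_right.2 h]; exact liftW_strictMono (WithBot.bot_lt_coe _)

lemma lexEnds_e00_lt {f : P.EB} (hf : f ≠ P.e00) : P.lexEnds P.e00 < P.lexEnds f := by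
  rw [lexEnds_e00]
  rcases edge_cases f with rfl | ⟨z, rfl⟩ | ⟨s | d, rfl⟩
  · exact absurd rfl hf
  · rw [lexEnds_coneEdge, Prod.Lex.toLex_lt_toLex]
    rcases le_liftW_bot_iff.1 (apex_le z) with h | h
    · exact Or.inr ⟨h.symm, liftW_strictMono (WithBot.bot_lt_coe z)⟩
    · exact Or.inl ((WithBot.bot_lt_coe _).trans_eq h.symm)
  · rw [lexEnds_eS]
    exact Prod.Lex.toLex_lt_toLex.2 (Or.inl (WithBot.bot_lt_coe _))
  · exact toLex_lt_lexEnds (bot_le.trans_lt (liftW_bot_lt_endMin_eG d))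

lemma lexEnds_coneEdge_strictMono : StrictMono fun z => P.lexEnds (P.coneEdge z) := by
  intro z z' h
  simp only [lexEnds_coneEdge, Prod.Lex.toLex_lt_toLex]
  rcases (apex_mono h.le).lt_or_eq with h' | h'
  exacts [Or.inl h', Or.inr ⟨h', liftW_strictMono (liftV_strictMono h)⟩]

lemma lexEnds_coneEdge_lt_redToEB {z : P.VG} {d : P.Ered} (hz : P.liftV z ∈ P.endsRed d) :
    P.lexEnds (P.coneEdge z) < P.lexEnds (P.redToEB d) := by
  rw [lexEnds_coneEdge]
  rcases d with s | d
  · obtain rfl : z = P.aVert s := by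
      rcases Sym2.mem_iff.1 (show P.liftV z ∈ s(⊥, P.liftV (P.aVert s)) from hz) with h | h
      exacts [absurd h WithBot.coe_ne_bot, liftV_injective h]
    rw [lexEnds_eS, apex_aVert]
    exact Prod.Lex.toLex_lt_toLex.2 (Or.inl (WithBot.bot_lt_coe _))
  · exact toLex_lt_lexEnds ((apex_le z).trans_lt (liftW_bot_lt_endMin_eG d))

lemma lt_or_eq_coneEdge_of_lexEnds_le {f : P.EB} {z : P.VG} {u : P.Vred}
    (hf : P.lexEnds f ≤ P.lexEnds (P.coneEdge z)) (hu : P.liftW u ∈ P.endsB f) :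
    u < P.liftV z ∨ f = P.coneEdge z := by
  induction u using WithBot.recBotCoe with
  | bot => exact Or.inl (WithBot.bot_lt_coe z)
  | coe y =>
  have hy : P.liftW ⊥ < P.liftW (P.liftV y) := liftW_strictMono (WithBot.bot_lt_coe y)
  rcases edge_cases f with rfl | ⟨z', rfl⟩ | ⟨s | d, rfl⟩
  · exact absurd (mem_endsB_e00.1 hu) hy.not_ge
  · rcases Sym2.mem_iff.1 (endsB_coneEdge z' ▸ hu) with hu | hu
    · exact absurd (hu ▸ apex_le z') hy.not_ge
    · obtain rfl := liftV_injective (liftW_injective hu)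
      rcases (not_lt.1 fun h => (lexEnds_coneEdge_strictMono h).not_ge hf).lt_or_eq with h | rfl
      exacts [Or.inl (liftV_strictMono h), Or.inr rfl]
  · have hys : y = P.aVert s := by
      rcases Sym2.mem_iff.1 (show _ ∈ s(P.liftW ⊥, _) from hu) with h | h
      exacts [absurd h hy.ne', liftV_injective (liftW_injective h)]
    rcases aVert_or_bVert z with ⟨a, rfl⟩ | ⟨b, rfl⟩
    · rw [lexEnds_eS, lexEnds_coneEdge, apex_aVert] at hf
      exact absurd hf (Prod.Lex.toLex_lt_toLex.2 (Or.inl (WithBot.bot_lt_coe _))).not_ge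
    · exact Or.inl (hys ▸ liftV_strictMono (aVert_lt_bVert s b))
  · rw [lexEnds_coneEdge] at hf
    exact absurd hf (toLex_lt_lexEnds ((apex_le z).trans_lt (liftW_bot_lt_endMin_eG d))).not_ge

/-- The condition of the theorem on the component of `v` in `T ∖ T₀`. -/
def HasActiveComponent (T : Finset P.EB) (v : P.Vred) : Prop :=
  ¬ Reachable P.endsRed (P.redOf T) v ⊥ ∧
    (∀ u : P.Vred, Reachable P.endsRed (P.redOf T) v u → P.ConnVertex T u → u = v) ∧
    (∀ u : P.Vred, Reachable P.endsRed (P.redOf T) v u → v ≤ u)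

lemma internallyActive_e00 (hord : P.AdmissibleOrder ord) (h : P.e00 ∈ T) :
    P.InternallyActive ord T P.e00 := by
  refine ⟨h, fun ⟨f, hf, _⟩ => ?_⟩
  let _ := ord
  obtain rfl | hf0 := eq_or_ne f P.e00
  · exact lt_irrefl _ hf
  · exact (hord.lexEnds_le hf).not_gt (lexEnds_e00_lt hf0)

lemma reachable_erase_coneEdge_of_redOf (z : P.VG) {u v : P.Vred}
    (h : Reachable P.endsRed (P.redOf T) u v) :
    Reachable P.endsB (T.erase (P.coneEdge z)) (P.liftW u) (P.liftW v) :=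
  h.map P.redToEB P.liftW fun d hd =>
    ⟨Finset.mem_erase.2 ⟨redToEB_ne_coneEdge d z, by simpa [redOf] using hd⟩, endsB_redToEB d⟩

lemma exists_liftW_eq_of_reachable_erase_coneEdge {z : P.VG}
    (hK : P.HasActiveComponent T (P.liftV z)) {w : P.W}
    (h : Reachable P.endsB (T.erase (P.coneEdge z)) (P.liftW (P.liftV z)) w) :
    ∃ u, Reachable P.endsRed (P.redOf T) (P.liftV z) u ∧ P.liftW u = w := by
  refine h.mem_of_closed (S := P.liftW '' {u | Reachable P.endsRed (P.redOf T) (P.liftV z) u})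
    ?_ ⟨_, .refl _ _, rfl⟩
  rintro g hg _ b hgab ⟨u, hu, rfl⟩
  have hu0 : ¬ P.liftW u ≤ P.liftW ⊥ := fun h => hK.1 (liftW_le_liftW_bot_iff.1 h ▸ hu)
  obtain ⟨hgz, hgT⟩ := Finset.mem_erase.1 hg
  rcases edge_cases g with rfl | ⟨z', rfl⟩ | ⟨d, rfl⟩
  · exact absurd (mem_endsB_e00.1 (hgab ▸ Sym2.mem_mk_left _ _)) hu0
  · rcases Sym2.eq_iff.1 ((endsB_coneEdge z').symm.trans hgab) with ⟨h, -⟩ | ⟨-, h⟩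
    · exact absurd (h ▸ apex_le z') hu0
    · obtain rfl := hK.2.1 u hu (connVertex_iff.2 ⟨z', (liftW_injective h).symm, hgT⟩)
      exact absurd (congrArg P.coneEdge (liftV_injective (liftW_injective h))) hgz
  · obtain ⟨a, a', had⟩ := Sym2.exists.1 ⟨P.endsRed d, rfl⟩
    have hd : d ∈ P.redOf T := by simpa [redOf] using hgT
    rw [endsB_redToEB, had, Sym2.map_mk] at hgab
    rcases Sym2.eq_iff.1 hgab with ⟨h, rfl⟩ | ⟨rfl, h⟩
    · exact ⟨a', hu.trans (.single hd (by rw [had, liftW_injective h])), rfl⟩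
    · exact ⟨a, hu.trans (.single hd (by rw [had, liftW_injective h, Sym2.eq_swap])), rfl⟩

lemma exists_reachable_mem_endsB_of_exchange (hT : IsSpanningTree P.endsB T) {z : P.VG}
    (hz : P.coneEdge z ∈ T) (hK : P.HasActiveComponent T (P.liftV z)) {f : P.EB}
    (hf : IsSpanningTree P.endsB (insert f (T.erase (P.coneEdge z)))) :
    ∃ u, Reachable P.endsRed (P.redOf T) (P.liftV z) u ∧ P.liftW u ∈ P.endsB f := by
  obtain ⟨p, q, hpq⟩ := Sym2.exists.1 ⟨P.endsB f, rfl⟩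
  obtain ⟨w, hw, hzw⟩ : ∃ w ∈ P.endsB f,
      Reachable P.endsB (T.erase (P.coneEdge z)) (P.liftW (P.liftV z)) w := by
    rcases (hT.exchange_iff hz (endsB_coneEdge z) hpq).1 hf with ⟨-, h⟩ | ⟨-, h⟩
    exacts [⟨q, hpq ▸ Sym2.mem_mk_right p q, h⟩, ⟨p, hpq ▸ Sym2.mem_mk_left p q, h⟩]
  obtain ⟨u, hu, rfl⟩ := exists_liftW_eq_of_reachable_erase_coneEdge hK hzw
  exact ⟨u, hu, hw⟩

lemma internallyActive_coneEdge_of_hasActiveComponent (hord : P.AdmissibleOrder ord)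
    (hT : IsSpanningTree P.endsB T) {z : P.VG} (hz : P.coneEdge z ∈ T)
    (hK : P.HasActiveComponent T (P.liftV z)) : P.InternallyActive ord T (P.coneEdge z) := by
  refine ⟨hz, fun ⟨f, hfz, hf⟩ => ?_⟩
  obtain ⟨u, hu, huf⟩ := exists_reachable_mem_endsB_of_exchange hT hz hK hf
  rcases lt_or_eq_coneEdge_of_lexEnds_le (hord.lexEnds_le hfz) huf with hlt | rfl
  · exact (hK.2.2 u hu).not_gt hlt
  · exact (let _ := ord; lt_irrefl _ hfz)

lemma not_reachable_of_internallyActive_coneEdge (hord : P.AdmissibleOrder ord)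
    (hT : IsSpanningTree P.endsB T) {z : P.VG}
    (hact : P.InternallyActive ord T (P.coneEdge z)) {w : P.W} (hw : w ≤ P.liftW ⊥) :
    ¬ Reachable P.endsB (T.erase (P.coneEdge z)) (P.liftW (P.liftV z)) w := by
  intro hzw
  obtain rfl | hne := eq_or_ne w (P.apex z)
  · exact hT.1 _ hact.1 _ _ (endsB_coneEdge z) hzw.symm
  · -- `0` and `0̄` are separated, so `00̄` crosses the cut
    have h00 : P.endsB P.e00 = s(P.apex z, w) := (Sym2.mem_and_mem_iff hne.symm).1
      ⟨mem_endsB_e00.2 (apex_le z), mem_endsB_e00.2 hw⟩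
    exact hact.2 ⟨P.e00, hord _ _ (lexEnds_e00_lt (coneEdge_ne_e00 z)),
      hT.exchange hact.1 (endsB_coneEdge z) h00 (.refl _ _) hzw⟩

lemma hasActiveComponent_of_internallyActive_coneEdge (hord : P.AdmissibleOrder ord)
    (hT : IsSpanningTree P.endsB T) {z : P.VG}
    (hact : P.InternallyActive ord T (P.coneEdge z)) :
    P.HasActiveComponent T (P.liftV z) := by
  have hA := fun {w} (hw : w ≤ P.liftW ⊥) =>
    not_reachable_of_internallyActive_coneEdge hord hT hact hw
  refine ⟨fun h => hA le_rfl (reachable_erase_coneEdge_of_redOf z h),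
    fun u hu hcu => ?_, fun u hu => ?_⟩
  · obtain ⟨z', rfl, hz'⟩ := connVertex_iff.1 hcu
    by_contra hne
    have hz'e : P.coneEdge z' ∈ T.erase (P.coneEdge z) :=
      Finset.mem_erase.2 ⟨fun h => hne (congrArg P.liftV (coneEdge_injective h)), hz'⟩
    exact hA (apex_le z') ((reachable_erase_coneEdge_of_redOf z hu).trans
      (.single hz'e ((endsB_coneEdge z').trans Sym2.eq_swap)))
  · by_contra! hlt
    induction u using WithBot.recBotCoe with
    | bot => exact hA le_rfl (reachable_erase_coneEdge_of_redOf z hu)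
    | coe z' =>
      have hroot := (hT.reachable_erase_or hact.1 (endsB_coneEdge z) (P.apex z')).resolve_right
        (hA (apex_le z'))
      exact hact.2 ⟨P.coneEdge z',
        hord _ _ (lexEnds_coneEdge_strictMono (WithBot.coe_lt_coe.1 hlt)),
        hT.exchange hact.1 (endsB_coneEdge z) (endsB_coneEdge z') hroot
          (reachable_erase_coneEdge_of_redOf z hu)⟩

lemma internallyActive_coneEdge_iff (hord : P.AdmissibleOrder ord)
    (hT : IsSpanningTree P.endsB T) {z : P.VG} (hz : P.coneEdge z ∈ T) :
    P.InternallyActive ord T (P.coneEdge z) ↔ P.HasActiveComponent T (P.liftV z) :=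
  ⟨hasActiveComponent_of_internallyActive_coneEdge hord hT,
    internallyActive_coneEdge_of_hasActiveComponent hord hT hz⟩

lemma exists_exchange_coneEdge (hT : IsSpanningTree P.endsB T) {e : P.EB} (he : e ∈ T)
    {x y : P.Vred} (hends : P.endsB e = s(P.liftW x, P.liftW y))
    (h0 : Reachable P.endsB (T.erase e) (P.liftW x) ⊥)
    (h0' : Reachable P.endsB (T.erase e) (P.liftW x) (P.liftW ⊥)) :
    ∃ z, P.liftV z = y ∧ IsSpanningTree P.endsB (insert (P.coneEdge z) (T.erase e)) := by
  induction y using WithBot.recBotCoe with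
  | bot => exact absurd h0' (hT.1 e he _ _ hends)
  | coe z =>
    have hapex : Reachable P.endsB (T.erase e) (P.liftW x) (P.apex z) := by
      rcases le_liftW_bot_iff.1 (apex_le z) with h | h <;> rw [h] <;> assumption
    exact ⟨z, rfl, hT.exchange he hends (endsB_coneEdge z) hapex (.refl _ _)⟩

lemma not_internallyActive_redToEB (hord : P.AdmissibleOrder ord)
    (hT : IsSpanningTree P.endsB T) {d : P.Ered} (hd : P.redToEB d ∈ T) :
    ¬ P.InternallyActive ord T (P.redToEB d) := by
  rintro ⟨-, hact⟩
  obtain ⟨x, y, hxy⟩ := Sym2.exists.1 ⟨P.endsRed d, rfl⟩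
  have hends : P.endsB (P.redToEB d) = s(P.liftW x, P.liftW y) := by
    rw [endsB_redToEB, hxy, Sym2.map_mk]
  have hcone : ∀ z, P.liftV z ∈ P.endsRed d →
      ¬ IsSpanningTree P.endsB (insert (P.coneEdge z) (T.erase (P.redToEB d))) :=
    fun z hz h => hact ⟨_, hord _ _ (lexEnds_coneEdge_lt_redToEB hz), h⟩
  have h00 : ¬ IsSpanningTree P.endsB (insert P.e00 (T.erase (P.redToEB d))) :=
    fun h => hact ⟨_, hord _ _ (lexEnds_e00_lt (redToEB_ne_e00 d)), h⟩
  rcases hT.reachable_erase_or hd hends ⊥ with h0 | h0 <;>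
    rcases hT.reachable_erase_or hd hends (P.liftW ⊥) with h0' | h0'
  · obtain ⟨z, rfl, h⟩ := exists_exchange_coneEdge hT hd hends h0 h0'
    exact hcone z (hxy ▸ Sym2.mem_mk_right _ _) h
  · exact h00 (hT.exchange hd hends rfl h0 h0')
  · exact h00 (hT.exchange hd hends Sym2.eq_swap h0' h0)
  · obtain ⟨z, rfl, h⟩ := exists_exchange_coneEdge hT hd (hends.trans Sym2.eq_swap) h0 h0'
    exact hcone z (hxy ▸ Sym2.mem_mk_left _ _) h

end BiconedGraph

open BiconedGraph in
/-- Remark 3.3.  An edge `e` of a spanning tree `T` of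
`G^{A,B}` is internally active iff either `e = 00̄`, or `e` is a connecting
edge whose connecting vertex `v` satisfies:  the component of `v` in
`T \\ T₀` does not contain `0̄`, contains no connecting vertex other than `v`,
and `v` is the smallest vertex of that component. -/
theorem internallyActive_iff (P : BiconedGraph)
    (ord : LinearOrder P.EB) (hord : P.AdmissibleOrder ord)
    (T : Finset P.EB) (hT : IsSpanningTree P.endsB T) (e : P.EB) (heT : e ∈ T) :
    P.InternallyActive ord T e ↔
      (e = P.e00 ∨
        ∃ v : P.Vred, P.ConnEdge T e v ∧
          ¬ Reachable P.endsRed (P.redOf T) v (⊥ : P.Vred) ∧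
          (∀ u : P.Vred, Reachable P.endsRed (P.redOf T) v u →
            P.ConnVertex T u → u = v) ∧
          (∀ u : P.Vred, Reachable P.endsRed (P.redOf T) v u → v ≤ u)) := by
  change _ ↔ e = P.e00 ∨ ∃ v, P.ConnEdge T e v ∧ P.HasActiveComponent T v
  rcases edge_cases e with rfl | ⟨z, rfl⟩ | ⟨d, rfl⟩
  · exact iff_of_true (internallyActive_e00 hord heT) (Or.inl rfl)
  · rw [internallyActive_coneEdge_iff hord hT heT]
    simp [connEdge_iff, coneEdge_injective.eq_iff, heT]
  · exact iff_of_false (not_internallyActive_redToEB hord hT heT) (by simp [connEdge_iff])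

end

end BiconedPaper
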